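/- arXiv:1707.01843 — 6 statements merged into one kernel-verified Lean document; each statement's English description precedes it below -/
import Mathlib

section
/- Let a ∈ ℝ with a < -1, let f_a(z) = e^z + a, and let ζ be the unique real number with ζ < 0 and e^ζ + a = ζ. Let B = {z ∈ ℂ : f_a^n(z) → ζ as n → ∞} be the basin of attraction of ζ (which equals the Fatou set of f_a). Then the set ((ℂ \ B) \ I(f_a)) ∪ {∞}, i.e. the set of non-escaping points of the Julia set together with ∞, is a totally separated subspace of the one-point compactification ℂ ∪ {∞}. -/
open Filter Set Metric Bornology

/-- The exponential map `f_a(z) = e^z + a`. -/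
noncomputable def expMap (a : ℂ) : ℂ → ℂ := fun z => Complex.exp z + a

/-- The escaping set `I(f_a) = {z : |f_a^n(z)| → ∞}`. -/
def escapingSet (a : ℂ) : Set ℂ :=
  {z | Tendsto (fun n => ‖(expMap a)^[n] z‖) atTop atTop}

/-- The maximum modulus `M(r, f_a) = max_{|z| = r} |e^z + a|`. -/
noncomputable def maxMod (a : ℂ) (r : ℝ) : ℝ :=
  sSup ((fun z => ‖expMap a z‖) '' Metric.sphere (0 : ℂ) r)

/-- The fast escaping set `A(f_a)`. -/
def fastEscapingSet (a : ℂ) : Set ℂ :=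
  {z | ∀ R > (0 : ℝ), ∃ l : ℕ, ∀ n : ℕ, (maxMod a)^[n] R ≤ ‖(expMap a)^[n + l] z‖}

/-- The set `A_R(f_a) = {z : |f_a^n(z)| ≥ M^n(R, f_a) for all n}`. -/
def levelFastSet (a : ℂ) (R : ℝ) : Set ℂ :=
  {z | ∀ n : ℕ, (maxMod a)^[n] R ≤ ‖(expMap a)^[n] z‖}

/-- The model growth function `F(t) = e^t - 1`. -/
noncomputable def Fgrowth : ℝ → ℝ := fun t => Real.exp t - 1

/-- The cycle `{p, f_a(p), …, f_a^{m-1}(p)}`. -/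
def cycleSet (a p : ℂ) (m : ℕ) : Set ℂ := {w | ∃ k < m, (expMap a)^[k] p = w}

/-- The basin of attraction of a set `C`: points whose orbits converge to `C`. -/
def basin (a : ℂ) (C : Set ℂ) : Set ℂ :=
  {z | Tendsto (fun k => Metric.infDist ((expMap a)^[k] z) C) atTop (nhds 0)}

/-- A topological space is totally separated if any two distinct points can be
separated by a clopen set containing the first but not the second. -/
def TotallySeparatedClopen (X : Type*) [TopologicalSpace X] : Prop :=
  ∀ a b : X, a ≠ b → ∃ U : Set X, IsClopen U ∧ a ∈ U ∧ b ∉ U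

/-- `z₀` is on a hair: there is an injective continuous arc through `z₀`
contained in the escaping set. -/
def OnHair (a z₀ : ℂ) : Prop :=
  ∃ γ : ℝ → ℂ, ContinuousOn γ (Set.Icc (-1) 1) ∧ Set.InjOn γ (Set.Icc (-1) 1) ∧
    γ 0 = z₀ ∧ ∀ t ∈ Set.Icc (-1 : ℝ) 1, γ t ∈ escapingSet a

/-- `z₀` is an endpoint: it is not on a hair, and there is an arc starting at `z₀`
which lies in the escaping set except possibly at `z₀` itself. -/
def IsEndpoint (a z₀ : ℂ) : Prop :=
  ¬ OnHair a z₀ ∧ ∃ γ : ℝ → ℂ, ContinuousOn γ (Set.Icc 0 1) ∧ γ 0 = z₀ ∧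
    ∀ t ∈ Set.Icc (0 : ℝ) 1, 0 < t → γ t ∈ escapingSet a

/-- The set `E(f_a)` of endpoints. -/
def endpoints (a : ℂ) : Set ℂ := {z | IsEndpoint a z}

/-- `E` separates the set `X` from `∞`: in the subspace `(ℂ \ E) ∪ X ∪ {∞}` of the
one-point compactification, there is a clopen set containing `X` but not `∞`. -/
def SeparatesFromInfty (E X : Set ℂ) : Prop :=
  ∃ U : Set ↥(((fun z : ℂ => (z : OnePoint ℂ)) '' (Eᶜ ∪ X)) ∪ {OnePoint.infty}),
    IsClopen U ∧
    (∀ x : ↥(((fun z : ℂ => (z : OnePoint ℂ)) '' (Eᶜ ∪ X)) ∪ {OnePoint.infty}),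
      (x : OnePoint ℂ) ∈ (fun z : ℂ => (z : OnePoint ℂ)) '' X → x ∈ U) ∧
    (∀ x : ↥(((fun z : ℂ => (z : OnePoint ℂ)) '' (Eᶜ ∪ X)) ∪ {OnePoint.infty}),
      (x : OnePoint ℂ) = OnePoint.infty → x ∉ U)

/-- There is an exhausting sequence of bounded simply connected domains whose
boundaries lie in `E`. -/
def SpiderWebSeq (E : Set ℂ) : Prop :=
  ∃ G : ℕ → Set ℂ,
    (∀ n, IsOpen (G n) ∧ IsConnected (G n) ∧ IsBounded (G n) ∧ SimplyConnectedSpace (G n)) ∧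
    (∀ n, G n ⊆ G (n + 1)) ∧ (∀ n, frontier (G n) ⊆ E) ∧ (⋃ n, G n) = Set.univ

/-- `E` is a spider's web: `E` is connected and admits an exhausting sequence of
bounded simply connected domains with boundaries in `E`. -/
def IsSpidersWeb (E : Set ℂ) : Prop := IsConnected E ∧ SpiderWebSeq E

/-!
The map `f_a` sends the complement of the tracts `{Re z > 0, cos (Im z) > 0}` into the half-plane
`Re z ≤ 1 + a`, on which it contracts towards `ζ`. So the orbit of a point of `J \ I` stays in the
tracts, where the inverse branches `w ↦ log (w - a) + 2πik` of `f_a` contract by the factor `1/|a|`.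

Let `F(s) = e^s - a`, so that `|f_a(z)| ≤ F(|z|)`, and `t_m = F^m(t₀)`. The points whose orbit falls
below `t_m` at some time `m` before leaving the tracts form an open set whose complement lies in
`B ∪ I(f_a)`. Its component through a point `y` with `|y| ≤ t₀` is bounded independently of `y`:
on a connected set the imaginary parts cannot jump between strips, so they stay below fixed bounds,
and the real parts are controlled backwards from time `m` through `|f_a(u) - a| = e^{Re u}`.

A point `z` of `J \ I` returns infinitely often to a disc `|w| < R`. Pulling the component through
a late return `f_a^n(z)` back along the orbit gives neighbourhoods of `z` of radius `O(|a|^{-n})`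
with boundary in `B ∪ I(f_a)`, whose traces on `(J \ I) ∪ {∞}` are clopen and miss `∞`.
-/

open Topology Real

lemma tendsto_comp_iterate_iterate_iff {α β : Type*} (g : α → α) (φ : α → β) (l : Filter β)
    (k : ℕ) (z : α) :
    Tendsto (fun n => φ (g^[n] (g^[k] z))) atTop l ↔ Tendsto (fun n => φ (g^[n] z)) atTop l := by
  simp_rw [← Function.iterate_add_apply]
  exact tendsto_add_atTop_iff_nat (f := fun n => φ (g^[n] z)) k

lemma tendsto_iterate_of_dist_le_mul {X : Type*} [PseudoMetricSpace X] {g : X → X} {s : Set X}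
    {p : X} {κ : ℝ} (hκ₀ : 0 ≤ κ) (hκ : κ < 1) (hs : MapsTo g s s)
    (hg : ∀ x ∈ s, dist (g x) p ≤ κ * dist x p) {x : X} (hx : x ∈ s) :
    Tendsto (fun n => g^[n] x) atTop (𝓝 p) := by
  have key : ∀ n, dist (g^[n] x) p ≤ κ ^ n * dist x p := fun n => by
    induction n with
    | zero => simp
    | succ n ih =>
      rw [Function.iterate_succ_apply', pow_succ', mul_assoc]
      exact (hg _ (hs.iterate n hx)).trans (mul_le_mul_of_nonneg_left ih hκ₀)
  rw [tendsto_iff_dist_tendsto_zero]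
  refine squeeze_zero (fun n => dist_nonneg) key ?_
  simpa using (tendsto_pow_atTop_nhds_zero_of_lt_one hκ₀ hκ).mul_const (dist x p)

lemma Complex.norm_exp_sub_exp_le {c : ℝ} {z w : ℂ} (hz : z.re ≤ c) (hw : w.re ≤ c) :
    ‖exp z - exp w‖ ≤ Real.exp c * ‖z - w‖ := by
  simpa using Convex.norm_image_sub_le_of_norm_hasDerivWithin_le
    (fun x _ => (hasDerivAt_exp x).hasDerivWithinAt)
    (fun x hx => by simpa [norm_exp] using Real.exp_le_exp.mpr hx)
    (convex_halfSpace_re_le c) hw hz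

lemma Complex.norm_log_sub_log_le {r : ℝ} (hr : 0 < r) {z w : ℂ} (hz : r < z.re)
    (hw : r < w.re) : ‖log z - log w‖ ≤ r⁻¹ * ‖z - w‖ := by
  simpa using Convex.norm_image_sub_le_of_norm_hasDerivWithin_le (s := {v | r < v.re})
    (fun x (hx : r < x.re) =>
      (hasDerivAt_log (mem_slitPlane_iff.mpr (Or.inl (hr.trans hx)))).hasDerivWithinAt)
    (fun x hx => by rw [norm_inv]; exact inv_anti₀ hr (hx.le.trans (re_le_norm x)))
    (convex_halfSpace_re_gt r) hw hz

lemma exists_abs_sub_int_mul_two_pi_lt {y : ℝ} (hy : 0 < cos y) :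
    ∃ k : ℤ, |y - k * (2 * π)| < π / 2 := by
  obtain ⟨hlo, hhi⟩ := toIocMod_mem_Ioc two_pi_pos (-π) y
  set y' := toIocMod two_pi_pos (-π) y with hy'
  have hsub : y' = y - toIocDiv two_pi_pos (-π) y * (2 * π) := by
    rw [hy', toIocMod, zsmul_eq_mul]
  have hcos : 0 < cos y' := by rwa [hsub, cos_sub_int_mul_two_pi]
  refine ⟨toIocDiv two_pi_pos (-π) y, ?_⟩
  rw [← hsub, abs_lt]
  constructor
  · by_contra! h
    have := cos_nonpos_of_pi_div_two_le_of_le (x := -y') (by linarith) (by linarith)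
    rw [cos_neg] at this
    linarith
  · by_contra! h
    have := cos_nonpos_of_pi_div_two_le_of_le (x := y') h (by linarith)
    linarith

lemma closure_connectedComponentIn_inter_subset {X : Type*} [TopologicalSpace X] (F : Set X)
    (x : X) : closure (connectedComponentIn F x) ∩ F ⊆ connectedComponentIn F x := by
  rintro y ⟨hy, hyF⟩
  by_cases hx : x ∈ F
  · have hpre : IsPreconnected (insert y (connectedComponentIn F x)) :=
      isPreconnected_connectedComponentIn.subset_closure (subset_insert _ _)
        (insert_subset hy subset_closure)
    exact hpre.subset_connectedComponentIn (mem_insert_of_mem _ (mem_connectedComponentIn hx))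
      (insert_subset hyF (connectedComponentIn_subset F x)) (mem_insert y _)
  · simp [connectedComponentIn_eq_empty hx] at hy

lemma IsOpen.disjoint_frontier_connectedComponentIn {X : Type*} [TopologicalSpace X]
    [LocallyConnectedSpace X] {F : Set X} (hF : IsOpen F) (x : X) :
    Disjoint (frontier (connectedComponentIn F x)) F := by
  rw [hF.connectedComponentIn.frontier_eq]
  exact disjoint_left.mpr fun y hy hyF =>
    hy.2 (closure_connectedComponentIn_inter_subset F x ⟨hy.1, hyF⟩)

open Set.Notation in
lemma OnePoint.isClopen_preimage_val_image_coe {X : Type*} [TopologicalSpace X]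
    {T : Set (OnePoint X)} {D : Set X} (hD : IsOpen D) (hDc : IsCompact (closure D))
    (hT : Disjoint ((↑) '' frontier D) T) : IsClopen (T ↓∩ ((↑) '' D)) := by
  refine isClopen_preimage_val (isOpenEmbedding_coe.isOpenMap D hD) (hT.mono_left ?_)
  have hcl : closure ((↑) '' D : Set (OnePoint X)) ⊆ (↑) '' closure D :=
    closure_minimal (image_mono subset_closure) (isClosed_image_coe.mpr ⟨isClosed_closure, hDc⟩)
  rw [(isOpenEmbedding_coe.isOpenMap D hD).frontier_eq, hD.frontier_eq,
    image_sdiff coe_injective]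
  exact sdiff_subset_sdiff_left hcl

open Set.Notation in
lemma exists_isClopen_mem_notMem_of_ne_infty {X : Type*} [MetricSpace X] [ProperSpace X]
    {S : Set X} (hS : ∀ z ∈ S, ∀ ε > 0, ∃ D, IsOpen D ∧ z ∈ D ∧ D ⊆ closedBall z ε ∧
      Disjoint (frontier D) S)
    {x y : ↥(((↑) '' S : Set (OnePoint X)) ∪ {OnePoint.infty})} (hxy : x ≠ y)
    (hy : y.1 ≠ OnePoint.infty) : ∃ U, IsClopen U ∧ y ∈ U ∧ x ∉ U := by
  obtain ⟨v, hv, hvy⟩ : ∃ v ∈ S, (v : OnePoint X) = y := y.2.resolve_right hy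
  obtain ⟨ε, hε, hx⟩ : ∃ ε > 0, ∀ w ∈ closedBall v ε, x.1 ≠ w := by
    induction hx : x.1 using OnePoint.rec with
    | infty => exact ⟨1, one_pos, fun w _ => OnePoint.infty_ne_coe w⟩
    | coe w =>
      have hvw : v ≠ w := fun h => hxy (Subtype.ext (by rw [hx, ← h, hvy]))
      refine ⟨dist v w / 2, half_pos (dist_pos.mpr hvw), fun u hu h => ?_⟩
      obtain rfl := OnePoint.coe_injective h
      rw [mem_closedBall, dist_comm] at hu
      linarith [dist_pos.mpr hvw]
  obtain ⟨D, hD, hvD, hDε, hDS⟩ := hS v hv ε hε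
  have hDc : IsCompact (closure D) :=
    (isCompact_closedBall v ε).of_isClosed_subset isClosed_closure
      (closure_minimal hDε isClosed_closedBall)
  refine ⟨_ ↓∩ ((↑) '' D), OnePoint.isClopen_preimage_val_image_coe hD hDc ?_,
    ⟨v, hvD, hvy⟩, ?_⟩
  · exact disjoint_union_right.mpr ⟨(disjoint_image_iff OnePoint.coe_injective).mpr hDS,
      disjoint_singleton_right.mpr OnePoint.infty_notMem_image_coe⟩
  · rintro ⟨w, hw, hwx⟩
    exact hx w (hDε hw) hwx.symm

lemma totallySeparatedClopen_image_coe_union_infty {X : Type*} [MetricSpace X] [ProperSpace X]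
    {S : Set X} (hS : ∀ z ∈ S, ∀ ε > 0, ∃ D, IsOpen D ∧ z ∈ D ∧ D ⊆ closedBall z ε ∧
      Disjoint (frontier D) S) :
    TotallySeparatedClopen ↥(((↑) '' S : Set (OnePoint X)) ∪ {OnePoint.infty}) := by
  intro x y hxy
  by_cases hy : y.1 = OnePoint.infty
  · exact exists_isClopen_mem_notMem_of_ne_infty hS hxy.symm
      fun hx => hxy (Subtype.ext (hx.trans hy.symm))
  · obtain ⟨U, hU, hyU, hxU⟩ := exists_isClopen_mem_notMem_of_ne_infty hS hxy hy
    exact ⟨Uᶜ, hU.compl, hxU, fun h => h hyU⟩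

lemma continuous_expMap (c : ℂ) : Continuous (expMap c) :=
  Complex.continuous_exp.add continuous_const

lemma expMap_sub (c z : ℂ) : expMap c z - c = Complex.exp z := add_sub_cancel_right _ _

section Dynamics

variable {a ζ t₀ : ℝ}

lemma re_expMap (z : ℂ) : (expMap a z).re = Real.exp z.re * cos z.im + a := by
  simp [expMap, Complex.exp_re]

noncomputable def growth (a : ℝ) (s : ℝ) : ℝ := Real.exp s - a

lemma monotone_growth : Monotone (growth a) :=
  fun _ _ h => sub_le_sub_right (Real.exp_le_exp.mpr h) a

lemma norm_expMap_le (ha : a ≤ 0) (z : ℂ) : ‖expMap a z‖ ≤ growth a ‖z‖ :=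
  calc ‖expMap a z‖ ≤ ‖Complex.exp z‖ + ‖(a : ℂ)‖ := norm_add_le _ _
    _ = Real.exp z.re - a := by rw [Complex.norm_exp, Complex.norm_real, Real.norm_of_nonpos ha,
          sub_eq_add_neg]
    _ ≤ growth a ‖z‖ := sub_le_sub_right (Real.exp_le_exp.mpr (Complex.re_le_norm z)) a

lemma norm_iterate_expMap_le (ha : a ≤ 0) (n : ℕ) (z : ℂ) :
    ‖(expMap a)^[n] z‖ ≤ (growth a)^[n] ‖z‖ := by
  induction n with
  | zero => simp
  | succ n ih =>
    rw [Function.iterate_succ_apply', Function.iterate_succ_apply']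
    exact (norm_expMap_le ha _).trans (monotone_growth ih)

lemma add_le_growth_iterate (ha : a ≤ 0) (n : ℕ) (s : ℝ) : s + n ≤ (growth a)^[n] s := by
  induction n with
  | zero => simp
  | succ n ih =>
    rw [Function.iterate_succ_apply', growth]
    push_cast
    linarith [Real.add_one_le_exp ((growth a)^[n] s)]

def attractingBasin (a ζ : ℝ) : Set ℂ :=
  {z | Tendsto (fun n => (expMap a)^[n] z) atTop (𝓝 (ζ : ℂ))}

lemma iterate_mem_attractingBasin_iff (n : ℕ) {z : ℂ} :
    (expMap a)^[n] z ∈ attractingBasin a ζ ↔ z ∈ attractingBasin a ζ :=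
  tendsto_comp_iterate_iterate_iff _ id _ n z

lemma iterate_mem_escapingSet_iff (c : ℂ) (n : ℕ) {z : ℂ} :
    (expMap c)^[n] z ∈ escapingSet c ↔ z ∈ escapingSet c :=
  tendsto_comp_iterate_iterate_iff _ norm _ n z

lemma re_expMap_le_of_re_nonpos {z : ℂ} (hz : z.re ≤ 0) : (expMap a z).re ≤ 1 + a := by
  rw [re_expMap]
  have := mul_le_of_le_one_right (Real.exp_pos z.re).le (cos_le_one z.im)
  linarith [Real.exp_le_one_iff.mpr hz]

lemma re_expMap_le_of_cos_nonpos {z : ℂ} (hz : cos z.im ≤ 0) : (expMap a z).re ≤ a := by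
  rw [re_expMap]
  linarith [mul_nonpos_of_nonneg_of_nonpos (Real.exp_pos z.re).le hz]

lemma re_le_subset_attractingBasin (ha : a < -1) (hζ : ζ < 0)
    (hfix : Real.exp ζ + a = ζ) : {z : ℂ | z.re ≤ 1 + a} ⊆ attractingBasin a ζ := by
  have hζ' : (ζ : ℂ).re ≤ 1 + a := by
    rw [Complex.ofReal_re]
    linarith [Real.exp_le_one_iff.mpr hζ.le]
  have hfixC : Complex.exp ζ + a = ζ := by exact_mod_cast hfix
  refine fun z hz => tendsto_iterate_of_dist_le_mul (Real.exp_pos (1 + a)).le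
    (Real.exp_lt_one_iff.mpr (by linarith)) (fun w hw => ?_) (fun w hw => ?_) hz
  · exact re_expMap_le_of_re_nonpos (hw.out.trans (by linarith))
  · have hsub : expMap a w - ζ = Complex.exp w - Complex.exp ζ := by
      rw [expMap]; linear_combination hfixC
    rw [dist_eq_norm, dist_eq_norm, hsub]
    exact Complex.norm_exp_sub_exp_le hw hζ'

def tracts : Set ℂ := {z | 0 < z.re ∧ 0 < cos z.im}

lemma isOpen_tracts : IsOpen tracts :=
  (isOpen_lt continuous_const Complex.continuous_re).inter
    (isOpen_lt continuous_const (continuous_cos.comp Complex.continuous_im))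

lemma compl_tracts_subset_attractingBasin (ha : a < -1) (hζ : ζ < 0)
    (hfix : Real.exp ζ + a = ζ) : tractsᶜ ⊆ attractingBasin a ζ := by
  intro z hz
  rw [← iterate_mem_attractingBasin_iff 1]
  apply re_le_subset_attractingBasin ha hζ hfix
  rcases not_and_or.mp hz with h | h
  · exact re_expMap_le_of_re_nonpos (not_lt.mp h)
  · exact (re_expMap_le_of_cos_nonpos (not_lt.mp h)).trans (by linarith)

def strip (k : ℤ) : Set ℂ := {z | 0 < z.re ∧ |z.im - k * (2 * π)| < π / 2}

lemma isOpen_strip (k : ℤ) : IsOpen (strip k) :=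
  (isOpen_lt continuous_const Complex.continuous_re).inter
    (isOpen_lt ((Complex.continuous_im.sub continuous_const).abs) continuous_const)

lemma exists_mem_strip {z : ℂ} (hz : z ∈ tracts) : ∃ k, z ∈ strip k :=
  (exists_abs_sub_int_mul_two_pi_lt hz.2).imp fun _ hk => ⟨hz.1, hk⟩

lemma frontier_strip_subset (k : ℤ) : frontier (strip k) ⊆ tractsᶜ := by
  rintro z hz ⟨hre, hcos⟩
  have hle : |z.im - k * (2 * π)| ≤ π / 2 :=
    closure_minimal (fun w hw => hw.2.le)
      (isClosed_le ((Complex.continuous_im.sub continuous_const).abs) continuous_const) hz.1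
  refine hz.2 ((isOpen_strip k).interior_eq.symm ▸ ⟨hre, hle.lt_of_ne fun h => ?_⟩)
  rw [← cos_sub_int_mul_two_pi z.im k, ← cos_abs, h, cos_pi_div_two] at hcos
  exact hcos.false

lemma log_exp_of_mem_strip {k : ℤ} {z : ℂ} (hz : z ∈ strip k) :
    Complex.log (Complex.exp z) = z - k * (2 * π * Complex.I) := by
  have him : (z - k * (2 * π * Complex.I)).im = z.im - k * (2 * π) := by simp
  have hb := abs_lt.mp hz.2
  rw [← Complex.exp_periodic.sub_int_mul_eq k,
    Complex.log_exp (by rw [him]; linarith [pi_pos]) (by rw [him]; linarith [pi_pos])]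

lemma norm_sub_le_of_mem_strip (ha : a < 0) {k : ℤ} {u v : ℂ} (hu : u ∈ strip k)
    (hv : v ∈ strip k) (hu' : 0 < (expMap a u).re) (hv' : 0 < (expMap a v).re) :
    ‖u - v‖ ≤ (-a)⁻¹ * ‖expMap a u - expMap a v‖ := by
  have hre : ∀ w : ℂ, 0 < (expMap a w).re → -a < (Complex.exp w).re := fun w hw => by
    rw [← expMap_sub, Complex.sub_re, Complex.ofReal_re]; linarith
  calc ‖u - v‖ = ‖Complex.log (Complex.exp u) - Complex.log (Complex.exp v)‖ := by
        rw [log_exp_of_mem_strip hu, log_exp_of_mem_strip hv, sub_sub_sub_cancel_right]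
    _ ≤ (-a)⁻¹ * ‖Complex.exp u - Complex.exp v‖ :=
        Complex.norm_log_sub_log_le (neg_pos.mpr ha) (hre u hu') (hre v hv')
    _ = (-a)⁻¹ * ‖expMap a u - expMap a v‖ := by rw [expMap, expMap, add_sub_add_right_eq_sub]

structure IsFencedNbhd (W U : Set ℂ) (z : ℂ) (ρ : ℝ) : Prop where
  isOpen : IsOpen U
  mem : z ∈ U
  re_pos : ∀ w ∈ U, 0 < w.re
  subset_closedBall : U ⊆ closedBall z ρ
  frontier_subset : frontier U ⊆ W

lemma IsFencedNbhd.preimage (ha : a < 0) {W V : Set ℂ} (hW : tractsᶜ ⊆ W)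
    (hWinv : MapsTo (expMap a) Wᶜ Wᶜ) {z : ℂ} {ρ : ℝ} (hV : IsFencedNbhd W V (expMap a z) ρ)
    (hz : z ∈ tracts) : ∃ U, IsFencedNbhd W U z ((-a)⁻¹ * ρ) := by
  obtain ⟨k, hk⟩ := exists_mem_strip hz
  refine ⟨strip k ∩ expMap a ⁻¹' V, ⟨(isOpen_strip k).inter (hV.isOpen.preimage
    (continuous_expMap _)), ⟨hk, hV.mem⟩, fun w hw => hw.1.1, ?_, ?_⟩⟩
  · rintro w ⟨hw, hwV⟩
    rw [mem_closedBall, dist_eq_norm]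
    have hwρ := hV.subset_closedBall hwV
    rw [mem_closedBall, dist_eq_norm] at hwρ
    calc ‖w - z‖ ≤ (-a)⁻¹ * ‖expMap a w - expMap a z‖ :=
          norm_sub_le_of_mem_strip ha hw hk (hV.re_pos _ hwV) (hV.re_pos _ hV.mem)
      _ ≤ (-a)⁻¹ * ρ := mul_le_mul_of_nonneg_left hwρ (inv_nonneg.mpr (by linarith))
  · intro x hx
    rcases frontier_inter_subset _ _ hx with h | h
    · exact hW (frontier_strip_subset k h.1)
    · by_contra hxW
      exact hWinv hxW (hV.frontier_subset ((continuous_expMap _).frontier_preimage_subset V h.2))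

lemma IsFencedNbhd.preimage_iterate (ha : a < 0) {W : Set ℂ} (hW : tractsᶜ ⊆ W)
    (hWinv : MapsTo (expMap a) Wᶜ Wᶜ) {n : ℕ} {z : ℂ} (hz : ∀ j < n, (expMap a)^[j] z ∈ tracts)
    {V : Set ℂ} {ρ : ℝ} (hV : IsFencedNbhd W V ((expMap a)^[n] z) ρ) :
    ∃ U, IsFencedNbhd W U z ((-a)⁻¹ ^ n * ρ) := by
  induction n generalizing z with
  | zero => exact ⟨V, by simpa using hV⟩
  | succ n ih =>
    rw [Function.iterate_succ_apply] at hV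
    obtain ⟨U', hU'⟩ := ih (fun j hj => by
      simpa only [← Function.iterate_succ_apply] using hz (j + 1) (by omega)) hV
    rw [pow_succ', mul_assoc]
    exact hU'.preimage ha hW hWinv (hz 0 n.succ_pos)

def slowSet (a t₀ : ℝ) : Set ℂ :=
  {z | ∃ m, ‖(expMap a)^[m] z‖ < (growth a)^[m] t₀ ∧ ∀ j ≤ m, (expMap a)^[j] z ∈ tracts}

lemma slowSet_subset_tracts : slowSet a t₀ ⊆ tracts := fun _ ⟨_, _, h⟩ => h 0 (Nat.zero_le _)

lemma isOpen_slowSet : IsOpen (slowSet a t₀) := by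
  have : slowSet a t₀ = ⋃ m, {z | ‖(expMap a)^[m] z‖ < (growth a)^[m] t₀} ∩
      ⋂ j ∈ Iic m, (expMap a)^[j] ⁻¹' tracts := by
    ext z; simp [slowSet]
  rw [this]
  exact isOpen_iUnion fun m =>
    (isOpen_lt (continuous_norm.comp ((continuous_expMap _).iterate m)) continuous_const).inter
      ((finite_Iic m).isOpen_biInter fun j _ =>
        isOpen_tracts.preimage ((continuous_expMap _).iterate j))

lemma compl_slowSet_subset (ha : a ≤ 0) :
    (slowSet a t₀)ᶜ ⊆ (⋃ j, (expMap a)^[j] ⁻¹' tractsᶜ) ∪ escapingSet a := by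
  intro z hz
  refine or_iff_not_imp_left.mpr fun hK => ?_
  simp only [mem_iUnion, mem_preimage, mem_compl_iff, not_exists, not_not] at hK
  have hbound : ∀ m : ℕ, t₀ + m ≤ ‖(expMap a)^[m] z‖ := fun m =>
    (add_le_growth_iterate ha m t₀).trans (not_lt.mp fun h => hz ⟨m, h, fun j _ => hK j⟩)
  exact tendsto_atTop_mono hbound (tendsto_atTop_add_const_left _ t₀ tendsto_natCast_atTop_atTop)

-- `cos (imBound a t₀ j) = -1`, whereas `cos (Im w) > 0` in the tracts: the bound is never attained
-- there, which makes `imBounded` open near `slowSet`.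
noncomputable def imBound (a t₀ : ℝ) (j : ℕ) : ℝ := ⌈(growth a)^[j] t₀⌉₊ * (2 * π) + π

lemma cos_imBound (j : ℕ) : cos (imBound a t₀ j) = -1 := cos_nat_mul_two_pi_add_pi _

lemma growth_iterate_le_imBound (j : ℕ) : (growth a)^[j] t₀ ≤ imBound a t₀ j := by
  have h1 := Nat.le_ceil ((growth a)^[j] t₀)
  have h2 : (⌈(growth a)^[j] t₀⌉₊ : ℝ) ≤ ⌈(growth a)^[j] t₀⌉₊ * (2 * π) :=
    le_mul_of_one_le_right (Nat.cast_nonneg _) (by linarith [pi_gt_three])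
  rw [imBound]
  linarith [pi_pos]

lemma two_mul_imBound_succ_sub_le (ha : a < -1) (ht : 10 - a ≤ t₀) (j : ℕ) :
    2 * imBound a t₀ (j + 1) - a ≤ Real.exp (imBound a t₀ j) := by
  have ht' : 10 - a ≤ (growth a)^[j] t₀ := by
    linarith [add_le_growth_iterate (a := a) (by linarith) j t₀, (j.cast_nonneg : (0 : ℝ) ≤ j)]
  set t := (growth a)^[j] t₀
  have hexp := Real.add_one_le_exp t
  have hnext : (growth a)^[j + 1] t₀ = Real.exp t - a := Function.iterate_succ_apply' ..
  have hup : imBound a t₀ (j + 1) ≤ (Real.exp t - a) * (2 * π) + 3 * π := by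
    rw [imBound, hnext]
    nlinarith [Nat.ceil_lt_add_one (show 0 ≤ Real.exp t - a by linarith), pi_pos]
  have hlow : t + 5 * t ≤ imBound a t₀ j := by
    rw [imBound]
    nlinarith [Nat.le_ceil t, pi_gt_three]
  have hexp_low : Real.exp t * 51 ≤ Real.exp (imBound a t₀ j) :=
    calc Real.exp t * 51 ≤ Real.exp t * Real.exp (5 * t) := by
          gcongr; linarith [Real.add_one_le_exp (5 * t)]
      _ = Real.exp (t + 5 * t) := (Real.exp_add _ _).symm
      _ ≤ Real.exp (imBound a t₀ j) := Real.exp_le_exp.mpr hlow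
  nlinarith [pi_lt_d2, pi_pos, Real.exp_pos t]

lemma norm_le_of_norm_expMap_le (ha : a < -1) (ht : 10 - a ≤ t₀) {j : ℕ} {u : ℂ}
    (hu : u ∈ tracts) (him : |u.im| ≤ imBound a t₀ j)
    (h : ‖expMap a u‖ ≤ 2 * imBound a t₀ (j + 1)) : ‖u‖ ≤ 2 * imBound a t₀ j := by
  have hre : u.re ≤ imBound a t₀ j := by
    rw [← Real.exp_le_exp, ← Complex.norm_exp, ← expMap_sub]
    calc ‖expMap a u - a‖ ≤ ‖expMap a u‖ + ‖(a : ℂ)‖ := norm_sub_le _ _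
      _ = ‖expMap a u‖ - a := by
          rw [Complex.norm_real, Real.norm_of_nonpos (by linarith), sub_eq_add_neg]
      _ ≤ Real.exp (imBound a t₀ j) := by linarith [two_mul_imBound_succ_sub_le ha ht j]
  calc ‖u‖ ≤ |u.re| + |u.im| := Complex.norm_le_abs_re_add_abs_im u
    _ ≤ 2 * imBound a t₀ j := by rw [abs_of_pos hu.1]; linarith

def imBounded (a t₀ : ℝ) : Set ℂ := {z | ∀ j, |((expMap a)^[j] z).im| ≤ imBound a t₀ j}

lemma isClosed_imBounded : IsClosed (imBounded a t₀) := by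
  simp only [imBounded, ofPred_forall]
  exact isClosed_iInter fun j => isClosed_le
    ((Complex.continuous_im.comp ((continuous_expMap _).iterate j)).abs) continuous_const

lemma slowSet_inter_imBounded_subset_interior (ha : a ≤ 0) :
    slowSet a t₀ ∩ imBounded a t₀ ⊆ interior (imBounded a t₀) := by
  rintro z ⟨⟨m, hm, htr⟩, hC⟩
  refine mem_interior.mpr ⟨{w | ‖(expMap a)^[m] w‖ < (growth a)^[m] t₀} ∩
    ⋂ j ∈ Iic m, {w | |((expMap a)^[j] w).im| < imBound a t₀ j}, ?_, ?_, ?_⟩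
  · rintro w ⟨hwm, hw⟩ j
    rcases le_or_gt j m with hj | hj
    · exact (mem_iInter₂.mp hw j hj).le
    · have hsplit : ∀ {β : Type} (g : β → β) (x : β), g^[j] x = g^[j - m] (g^[m] x) :=
        fun g x => by rw [← Function.iterate_add_apply, Nat.sub_add_cancel hj.le]
      calc |((expMap a)^[j] w).im| ≤ ‖(expMap a)^[j - m] ((expMap a)^[m] w)‖ := by
            rw [← hsplit]; exact Complex.abs_im_le_norm _
        _ ≤ (growth a)^[j - m] ((growth a)^[m] t₀) :=
            (norm_iterate_expMap_le ha _ _).trans (monotone_growth.iterate _ hwm.le)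
        _ ≤ imBound a t₀ j := by rw [← hsplit]; exact growth_iterate_le_imBound j
  · exact (isOpen_lt (continuous_norm.comp ((continuous_expMap _).iterate m))
      continuous_const).inter ((finite_Iic m).isOpen_biInter fun j _ => isOpen_lt
        ((Complex.continuous_im.comp ((continuous_expMap _).iterate j)).abs) continuous_const)
  · refine ⟨hm, mem_iInter₂.mpr fun j hj => (hC j).lt_of_ne fun h => ?_⟩
    have := (htr j hj).2
    rw [← cos_abs, h, cos_imBound] at this
    linarith

lemma norm_le_of_mem_slowSet_of_mem_imBounded (ha : a < -1) (ht : 10 - a ≤ t₀) {z : ℂ}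
    (hz : z ∈ slowSet a t₀) (hC : z ∈ imBounded a t₀) : ‖z‖ ≤ 2 * imBound a t₀ 0 := by
  obtain ⟨m, hm, htr⟩ := hz
  have key : ∀ j ≤ m, ‖(expMap a)^[j] z‖ ≤ 2 * imBound a t₀ j := by
    intro j hj
    induction hj using Nat.decreasingInduction with
    | self =>
      have : 0 ≤ imBound a t₀ m := by unfold imBound; positivity
      linarith [growth_iterate_le_imBound (a := a) (t₀ := t₀) m]
    | of_succ j hj ih =>
      refine norm_le_of_norm_expMap_le ha ht (htr j hj.le) (hC j) ?_
      rwa [Function.iterate_succ_apply'] at ih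
  simpa using key 0 (Nat.zero_le m)

lemma connectedComponentIn_slowSet_subset_closedBall (ha : a < -1) (ht : 10 - a ≤ t₀) {y : ℂ}
    (hy : ‖y‖ ≤ t₀) :
    connectedComponentIn (slowSet a t₀) y ⊆ closedBall 0 (2 * imBound a t₀ 0) := by
  by_cases hyS : y ∈ slowSet a t₀
  swap
  · simp [connectedComponentIn_eq_empty hyS]
  have hyC : y ∈ imBounded a t₀ := fun j =>
    (Complex.abs_im_le_norm _).trans ((norm_iterate_expMap_le (by linarith) j y).trans
      ((monotone_growth.iterate j hy).trans (growth_iterate_le_imBound j)))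
  have hint := slowSet_inter_imBounded_subset_interior (a := a) (t₀ := t₀) (by linarith)
  have hsub : connectedComponentIn (slowSet a t₀) y ⊆ interior (imBounded a t₀) :=
    isPreconnected_connectedComponentIn.subset_of_closure_inter_subset isOpen_interior
      ⟨y, mem_connectedComponentIn hyS, hint ⟨hyS, hyC⟩⟩
      fun x ⟨hx, hxQ⟩ => hint ⟨connectedComponentIn_subset _ _ hxQ,
        closure_minimal interior_subset isClosed_imBounded hx⟩
  intro x hx
  rw [mem_closedBall, dist_zero_right]
  exact norm_le_of_mem_slowSet_of_mem_imBounded ha ht (connectedComponentIn_subset _ _ hx)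
    (interior_subset (hsub hx))

lemma compl_slowSet_subset_attractingBasin_union_escapingSet (ha : a < -1) (hζ : ζ < 0)
    (hfix : Real.exp ζ + a = ζ) : (slowSet a t₀)ᶜ ⊆ attractingBasin a ζ ∪ escapingSet a := by
  intro z hz
  rcases compl_slowSet_subset (by linarith) hz with h | h
  · obtain ⟨j, hj⟩ := mem_iUnion.mp h
    exact Or.inl ((iterate_mem_attractingBasin_iff j).mp
      (compl_tracts_subset_attractingBasin ha hζ hfix hj))
  · exact Or.inr h

lemma isFencedNbhd_connectedComponentIn_slowSet (ha : a < -1) (hζ : ζ < 0)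
    (hfix : Real.exp ζ + a = ζ) (ht : 10 - a ≤ t₀) {y : ℂ} (hy : ‖y‖ ≤ t₀)
    (hyS : y ∈ slowSet a t₀) :
    IsFencedNbhd (attractingBasin a ζ ∪ escapingSet a) (connectedComponentIn (slowSet a t₀) y) y
      (4 * imBound a t₀ 0) := by
  have hball := connectedComponentIn_slowSet_subset_closedBall ha ht hy
  refine ⟨isOpen_slowSet.connectedComponentIn, mem_connectedComponentIn hyS,
    fun w hw => (slowSet_subset_tracts (connectedComponentIn_subset _ _ hw)).1, ?_,
    fun x hx => compl_slowSet_subset_attractingBasin_union_escapingSet ha hζ hfix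
      (disjoint_left.mp (isOpen_slowSet.disjoint_frontier_connectedComponentIn y) hx)⟩
  refine hball.trans (closedBall_subset_closedBall' ?_)
  have := hball (mem_connectedComponentIn hyS)
  rw [mem_closedBall, dist_comm] at this
  linarith

lemma mapsTo_expMap_compl_attractingBasin_union_escapingSet :
    MapsTo (expMap a) (attractingBasin a ζ ∪ escapingSet a)ᶜ
      (attractingBasin a ζ ∪ escapingSet a)ᶜ :=
  fun _ hz h =>
    hz (h.imp (iterate_mem_attractingBasin_iff 1).mp (iterate_mem_escapingSet_iff _ 1).mp)

lemma exists_isFencedNbhd (ha : a < -1) (hζ : ζ < 0) (hfix : Real.exp ζ + a = ζ) {z : ℂ}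
    (hz : z ∈ (attractingBasin a ζ)ᶜ \ escapingSet a) {ε : ℝ} (hε : 0 < ε) :
    ∃ U, IsFencedNbhd (attractingBasin a ζ ∪ escapingSet a) U z ε := by
  have hW : tractsᶜ ⊆ attractingBasin a ζ ∪ escapingSet a :=
    (compl_tracts_subset_attractingBasin ha hζ hfix).trans subset_union_left
  have hWinv := mapsTo_expMap_compl_attractingBasin_union_escapingSet (a := a) (ζ := ζ)
  have htracts : ∀ j, (expMap a)^[j] z ∈ tracts := fun j =>
    by_contra fun h => hWinv.iterate j (by rwa [compl_union]) (hW h)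
  obtain ⟨R, hR⟩ : ∃ R, ∃ᶠ n in atTop, ‖(expMap a)^[n] z‖ < R := by
    simpa only [escapingSet, mem_ofPred_eq, Filter.tendsto_atTop, not_forall,
      Filter.not_eventually, not_le] using hz.2
  set t₀ := max R (10 - a)
  have hsmall : Tendsto (fun n => (-a)⁻¹ ^ n * (4 * imBound a t₀ 0)) atTop (𝓝 0) := by
    simpa using (tendsto_pow_atTop_nhds_zero_of_lt_one (inv_nonneg.mpr (by linarith : 0 ≤ -a))
      (inv_lt_one_of_one_lt₀ (by linarith : 1 < -a))).mul_const (4 * imBound a t₀ 0)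
  obtain ⟨n, hn, hnε⟩ := (hR.and_eventually (hsmall.eventually (eventually_lt_nhds hε))).exists
  have hyS : (expMap a)^[n] z ∈ slowSet a t₀ :=
    ⟨0, hn.trans_le (le_max_left _ _), fun j hj => by simpa [Nat.le_zero.mp hj] using htracts n⟩
  obtain ⟨U, hU⟩ := (isFencedNbhd_connectedComponentIn_slowSet ha hζ hfix (le_max_right _ _)
    (hn.le.trans (le_max_left _ _)) hyS).preimage_iterate (by linarith) hW hWinv
      fun j _ => htracts j
  exact ⟨U, { hU with
    subset_closedBall := hU.subset_closedBall.trans (closedBall_subset_closedBall hnε.le) }⟩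

end Dynamics

/-- **Non-escaping endpoints do not explode.** For `a < -1`, with `ζ` the attracting
real fixed point and `B` its basin of attraction (the Fatou set), the set of
non-escaping points of the Julia set together with `∞` is totally separated in the
one-point compactification of `ℂ`. -/
theorem nonescaping_totally_separated (a : ℝ) (ha : a < -1) (ζ : ℝ) (hζ : ζ < 0)
    (hfix : Real.exp ζ + a = ζ) :
    TotallySeparatedClopen
      ↥(((fun z : ℂ => (z : OnePoint ℂ)) ''
          (({z : ℂ | Tendsto (fun n => (expMap (a : ℂ))^[n] z) atTop (nhds (ζ : ℂ))})ᶜ \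
            escapingSet (a : ℂ))) ∪ {OnePoint.infty}) := by
  refine totallySeparatedClopen_image_coe_union_infty fun z hz ε hε => ?_
  obtain ⟨U, hU⟩ := exists_isFencedNbhd ha hζ hfix hz hε
  exact ⟨U, hU.isOpen, hU.mem, hU.subset_closedBall,
    disjoint_left.mpr fun x hx hxS => (hU.frontier_subset hx).elim hxS.1 hxS.2⟩
end

section
/- Let X be a metric space and x ∈ X. Suppose that A := X \ {x} is totally separated, and that every point of A is separated from x in X. Then X is totally separated. -/
open Filter Set Metric Bornology

/-! A clopen set `U` of `X \ {x}` separating `a` from `b` need not be closed in `X`, since `x` may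
lie in its closure; intersecting it with a clopen set `W` of `X` that contains `a` and avoids `x`
removes that possibility, and the cases where `a` or `b` is `x` are the hypothesis itself. -/

theorem IsClopen.image_val_inter {X : Type*} [TopologicalSpace X] {s W : Set X} {U : Set s}
    (hU : IsClopen U) (hW : IsClopen W) (hWs : W ⊆ s) :
    IsClopen (Subtype.val '' U ∩ W) := by
  have hUW : Subtype.val '' U ∩ W = (Subtype.val : W → X) '' (inclusion hWs ⁻¹' U) := by
    ext y
    constructor
    · rintro ⟨⟨⟨y, _⟩, hyU, rfl⟩, hyW⟩
      exact ⟨⟨y, hyW⟩, hyU, rfl⟩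
    · rintro ⟨⟨y, hyW⟩, hyU, rfl⟩
      exact ⟨⟨⟨y, hWs hyW⟩, hyU, rfl⟩, hyW⟩
  have hU' := hU.preimage (continuous_inclusion hWs)
  rw [hUW]
  exact ⟨hW.isClosed.isClosedMap_subtype_val _ hU'.isClosed,
    hW.isOpen.isOpenMap_subtype_val _ hU'.isOpen⟩

/-- If `X` is a metric space, `x ∈ X`, the subspace `X \ {x}` is totally separated, and
every point of `X \ {x}` is separated from `x` in `X`, then `X` is totally separated. -/
theorem totallySeparated_of_separated_from_point {X : Type*} [MetricSpace X] (x : X)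
    (hA : TotallySeparatedClopen ↥({x}ᶜ : Set X))
    (hsep : ∀ a : X, a ≠ x → ∃ U : Set X, IsClopen U ∧ a ∈ U ∧ x ∉ U) :
    TotallySeparatedClopen X := by
  intro a b hab
  by_cases hb : b = x
  · subst hb
    exact hsep a hab
  by_cases ha : a = x
  · subst ha
    obtain ⟨U, hU, hbU, haU⟩ := hsep b hb
    exact ⟨Uᶜ, hU.compl, haU, not_not_intro hbU⟩
  obtain ⟨U, hU, haU, hbU⟩ := hA ⟨a, ha⟩ ⟨b, hb⟩ (Subtype.coe_ne_coe.mp hab)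
  obtain ⟨W, hW, haW, hxW⟩ := hsep a ha
  refine ⟨Subtype.val '' U ∩ W, hU.image_val_inter hW (subset_compl_singleton_iff.mpr hxW),
    ⟨⟨_, haU, rfl⟩, haW⟩, ?_⟩
  rintro ⟨⟨c, hc, rfl⟩, -⟩
  exact hbU hc
end

section
/- Fix K ≥ 1 and a ∈ ℂ, let F(t) = e^t − 1 with F^n its n-th iterate, and let M(r, f_a) = max_{|z| = r} |e^z + a| with M^n(R, f_a) the n-th iterate of r ↦ M(r, f_a) applied to R. Then for all R ≥ max(3, ln(1 + 2(|a| + K))) and all n ≥ 1, one has R < F^n(R − 1) + K ≤ M^n(R, f_a) ≤ F^n(R + 1) − K. -/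
open Filter Set Metric Bornology

/- With `c = ‖a‖ + K` and `e^R ≥ 1 + 2c`, one step of `M(r) ≈ e^r ± ‖a‖` gains more than `K`
over `F(t) = e^t - 1` once the argument is shifted by `1`: `F(t) + K ≤ e^{t+1} - ‖a‖` and
`e^{s-1} + ‖a‖ ≤ F(s) - K`, because `e^{t+1} - e^t = (e - 1)e^t` is at least `e^R / 2` for
`t ≥ R - 1` and at least `e^R` for `t ≥ R`. Comparing `M^n(R)` with `F^n(R ∓ 1)` step by step
then gives both bounds, and `F(t) > t` gives `R < F^n(R - 1) + K`. -/

lemma norm_expMap_le_of_mem_sphere (a : ℂ) {r : ℝ} {z : ℂ} (hz : z ∈ sphere (0 : ℂ) r) :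
    ‖expMap a z‖ ≤ Real.exp r + ‖a‖ :=
  (norm_add_le _ _).trans <| by
    rw [Complex.norm_exp, ← mem_sphere_zero_iff_norm.1 hz]
    gcongr
    exact Complex.re_le_norm z

lemma maxMod_le (a : ℂ) (r : ℝ) : maxMod a r ≤ Real.exp r + ‖a‖ :=
  Real.sSup_le (by rintro _ ⟨z, hz, rfl⟩; exact norm_expMap_le_of_mem_sphere a hz) (by positivity)

lemma exp_sub_norm_le_maxMod (a : ℂ) {r : ℝ} (hr : 0 ≤ r) : Real.exp r - ‖a‖ ≤ maxMod a r := by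
  have hbdd : BddAbove ((fun z => ‖expMap a z‖) '' sphere (0 : ℂ) r) := by
    refine ⟨Real.exp r + ‖a‖, ?_⟩
    rintro _ ⟨z, hz, rfl⟩
    exact norm_expMap_le_of_mem_sphere a hz
  have hr_mem : (r : ℂ) ∈ sphere (0 : ℂ) r := by simp [abs_of_nonneg hr]
  calc Real.exp r - ‖a‖ = ‖Complex.exp r‖ - ‖-a‖ := by
        rw [norm_neg, Complex.norm_exp_ofReal]
    _ ≤ ‖expMap a r‖ := by simpa [expMap] using norm_sub_norm_le (Complex.exp r) (-a)
    _ ≤ maxMod a r := le_csSup hbdd ⟨r, hr_mem, rfl⟩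

lemma two_mul_exp_le_exp_add_one (t : ℝ) : 2 * Real.exp t ≤ Real.exp (t + 1) := by
  rw [Real.exp_add, mul_comm]
  gcongr
  linarith [Real.add_one_le_exp 1]

lemma lt_Fgrowth {t : ℝ} (ht : t ≠ 0) : t < Fgrowth t := by
  simp only [Fgrowth]
  linarith [Real.add_one_lt_exp ht]

lemma le_iterate_Fgrowth (n : ℕ) (t : ℝ) : t ≤ Fgrowth^[n] t :=
  Function.id_le_iterate_of_id_le
    (fun t => by simp only [Fgrowth, id]; linarith [Real.add_one_le_exp t]) n t

lemma lt_iterate_Fgrowth {t : ℝ} (ht : 0 < t) {n : ℕ} (hn : n ≠ 0) : t < Fgrowth^[n] t := by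
  obtain ⟨m, rfl⟩ := Nat.exists_eq_succ_of_ne_zero hn
  rw [Function.iterate_succ_apply]
  exact (lt_Fgrowth ht.ne').trans_le (le_iterate_Fgrowth m _)

section Step

variable {a : ℂ} {K R : ℝ} (hK : 0 ≤ K) (hR : 1 + 2 * (‖a‖ + K) ≤ Real.exp R)
include hK hR

lemma Fgrowth_add_le_maxMod {t x : ℝ} (ht : R - 1 ≤ t) (hx : t + 1 ≤ x) :
    Fgrowth t + K ≤ maxMod a x := by
  have hR0 : 0 ≤ R := Real.one_le_exp_iff.1 (by linarith [norm_nonneg a])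
  have hexp_t : Real.exp (R - 1) ≤ Real.exp t := Real.exp_le_exp.2 ht
  have hexp_R : Real.exp R = Real.exp (R - 1) * Real.exp 1 := by
    rw [← Real.exp_add, sub_add_cancel]
  have hexp_t1 : Real.exp (t + 1) = Real.exp t * Real.exp 1 := Real.exp_add t 1
  have he : 2 ≤ Real.exp 1 := by linarith [Real.add_one_le_exp 1]
  calc Fgrowth t + K ≤ Real.exp (t + 1) - ‖a‖ := by
        simp only [Fgrowth]
        nlinarith [mul_le_mul_of_nonneg_left hexp_t (by linarith : (0 : ℝ) ≤ Real.exp 1 - 1),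
          mul_le_mul_of_nonneg_left he (Real.exp_pos (R - 1)).le]
    _ ≤ Real.exp x - ‖a‖ := by gcongr
    _ ≤ maxMod a x := exp_sub_norm_le_maxMod a (by linarith)

lemma maxMod_le_Fgrowth_sub {s x : ℝ} (hs : R + 1 ≤ s) (hx : x + 1 ≤ s) :
    maxMod a x ≤ Fgrowth s - K := by
  have hexp_s : Real.exp R ≤ Real.exp (s - 1) := Real.exp_le_exp.2 (by linarith)
  have h2 := two_mul_exp_le_exp_add_one (s - 1)
  rw [sub_add_cancel] at h2
  calc maxMod a x ≤ Real.exp x + ‖a‖ := maxMod_le a x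
    _ ≤ Real.exp (s - 1) + ‖a‖ := by gcongr; linarith
    _ ≤ Fgrowth s - K := by simp only [Fgrowth]; linarith [norm_nonneg a]

end Step

lemma maxMod_iterate_succ_bounds {a : ℂ} {K R : ℝ} (hK : 1 ≤ K)
    (hR : 1 + 2 * (‖a‖ + K) ≤ Real.exp R) (m : ℕ) :
    Fgrowth^[m + 1] (R - 1) + K ≤ (maxMod a)^[m + 1] R ∧
      (maxMod a)^[m + 1] R ≤ Fgrowth^[m + 1] (R + 1) - K := by
  have hK0 : 0 ≤ K := by linarith
  induction m with
  | zero =>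
    exact ⟨Fgrowth_add_le_maxMod hK0 hR le_rfl (by linarith),
      maxMod_le_Fgrowth_sub hK0 hR le_rfl (by linarith)⟩
  | succ m ih =>
    rw [Function.iterate_succ_apply' Fgrowth (m + 1), Function.iterate_succ_apply' (maxMod a),
      Function.iterate_succ_apply' Fgrowth (m + 1)]
    exact ⟨Fgrowth_add_le_maxMod hK0 hR (le_iterate_Fgrowth _ _) (by linarith [ih.1]),
      maxMod_le_Fgrowth_sub hK0 hR (le_iterate_Fgrowth _ _) (by linarith [ih.2])⟩

/-- **Iterated exponential growth, maximum modulus estimate.** For `K ≥ 1`, `a ∈ ℂ`,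
`R ≥ max(3, ln(1 + 2(|a| + K)))` and `n ≥ 1`, one has
`R < F^n(R - 1) + K ≤ M^n(R, f_a) ≤ F^n(R + 1) - K`. -/
theorem maxMod_iterate_growth (K : ℝ) (hK : 1 ≤ K) (a : ℂ) (R : ℝ)
    (hR : max 3 (Real.log (1 + 2 * (‖a‖ + K))) ≤ R) (n : ℕ) (hn : 1 ≤ n) :
    R < Fgrowth^[n] (R - 1) + K ∧ Fgrowth^[n] (R - 1) + K ≤ (maxMod a)^[n] R ∧
      (maxMod a)^[n] R ≤ Fgrowth^[n] (R + 1) - K := by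
  have hR3 : 3 ≤ R := le_of_max_le_left hR
  have hexpR : 1 + 2 * (‖a‖ + K) ≤ Real.exp R :=
    (Real.log_le_iff_le_exp (by positivity)).1 (le_of_max_le_right hR)
  have hF : R - 1 < Fgrowth^[n] (R - 1) := lt_iterate_Fgrowth (by linarith) (by omega)
  obtain ⟨m, rfl⟩ := Nat.exists_eq_add_of_le' hn
  exact ⟨by linarith, maxMod_iterate_succ_bounds hK hexpR m⟩
end

section
/- For every a ∈ ℂ and every R > 0, the maximum modulus satisfies M(R, f_a) > R, where M(R, f_a) = max_{|z| = R} |e^z + a|. (In the paper's notation, R(f_a) = 0 for all a ∈ ℂ.) -/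
open Filter Set Metric Bornology

/-!
Whatever `a` is, `f_a(R) - f_a(-R) = e^R - e^{-R} = 2 sinh R`, so one of the two points `±R`
of the circle `|z| = R` has `|f_a(z)| ≥ sinh R`, and `sinh R > R` for `R > 0`.
-/

lemma bddAbove_norm_expMap_sphere (a : ℂ) (r : ℝ) :
    BddAbove ((fun z => ‖expMap a z‖) '' sphere (0 : ℂ) r) :=
  ((isCompact_sphere (0 : ℂ) r).image
    (continuous_norm.comp (Complex.continuous_exp.add continuous_const))).bddAbove

lemma norm_expMap_le_maxMod (a : ℂ) {r : ℝ} {z : ℂ} (hz : z ∈ sphere (0 : ℂ) r) :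
    ‖expMap a z‖ ≤ maxMod a r :=
  le_csSup (bddAbove_norm_expMap_sphere a r) ⟨z, hz, rfl⟩

lemma expMap_sub_expMap_neg (a z : ℂ) : expMap a z - expMap a (-z) = 2 * Complex.sinh z := by
  rw [Complex.sinh, expMap, expMap]
  ring

lemma sinh_le_maxMod (a : ℂ) {r : ℝ} (hr : 0 ≤ r) : Real.sinh r ≤ maxMod a r := by
  have hmem : (r : ℂ) ∈ sphere (0 : ℂ) r := by simp [abs_of_nonneg hr]
  have hmem_neg : -(r : ℂ) ∈ sphere (0 : ℂ) r := by simpa using hmem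
  have hnorm : ‖expMap a r - expMap a (-r)‖ = 2 * Real.sinh r := by
    rw [expMap_sub_expMap_neg, ← Complex.ofReal_sinh, norm_mul, Complex.norm_real,
      Real.norm_of_nonneg (Real.sinh_nonneg_iff.mpr hr)]
    norm_num
  linarith [norm_sub_le (expMap a r) (expMap a (-r)), norm_expMap_le_maxMod a hmem,
    norm_expMap_le_maxMod a hmem_neg]

/-- For every `a ∈ ℂ` and every `R > 0`, the maximum modulus satisfies `M(R, f_a) > R`;
in other words, `R(f_a) = 0` for all `a ∈ ℂ`. -/
theorem maxMod_gt (a : ℂ) (R : ℝ) (hR : 0 < R) : R < maxMod a R :=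
  (Real.self_lt_sinh_iff.mpr hR).trans_le (sinh_le_maxMod a hR.le)
end

section
/- Let a ∈ ℂ and μ ≥ 0, and let F(t) = e^t − 1 with F^k its k-th iterate. Then there exists K ≥ μ + 2 (one may take K = max(2 + ln(5 + |a|), μ + 2)) such that the following holds for all z ∈ ℂ with Re z ≥ K: if n ≥ 0 is such that max(−Re f_a^k(z), |Im f_a^k(z)|) ≤ F^k(μ) for all 0 ≤ k < n, then |f_a^n(z)| ≥ F^n(Re z − 2). -/
open Filter Set Metric Bornology

/-! Along the orbit, `Re f_a^k(z) ≥ F^k(t) + 2` with `t = Re z - 2`: a point with real part at least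
`s + 2` is mapped by `f_a` to a point of modulus at least
`e^{s+2} - |a| ≥ 2 e^s = 2 F(s) + 2` (the choice of `K` gives `|a| ≤ e^t ≤ e^s`), and a point of
that modulus lying in the box `max(-Re, |Im|) ≤ F(s)` has `|Re| ≥ F(s) + 2`, hence `Re ≥ F(s) + 2`.
The box condition at step `k` holds because `F^k(μ) ≤ F^k(t)`. -/

open Real

lemma self_le_Fgrowth (s : ℝ) : s ≤ Fgrowth s := by
  simp only [Fgrowth]
  linarith [add_one_le_exp s]

lemma self_le_iterate_Fgrowth (k : ℕ) (s : ℝ) : s ≤ Fgrowth^[k] s := by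
  induction k with
  | zero => rfl
  | succ k ih =>
    rw [Function.iterate_succ_apply']
    exact ih.trans (self_le_Fgrowth _)

lemma monotone_Fgrowth : Monotone Fgrowth := fun _ _ h =>
  sub_le_sub_right (exp_le_exp.mpr h) 1

lemma exp_re_sub_norm_le_norm_expMap (a w : ℂ) : exp w.re - ‖a‖ ≤ ‖expMap a w‖ := by
  have h := norm_sub_norm_le (Complex.exp w) (-a)
  rw [Complex.norm_exp, norm_neg, sub_neg_eq_add] at h
  exact h

lemma two_mul_exp_le_norm_expMap {a w : ℂ} {s : ℝ} (ha : ‖a‖ ≤ exp s) (hw : s + 2 ≤ w.re) :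
    2 * exp s ≤ ‖expMap a w‖ := by
  have hexp : 3 * exp s ≤ exp w.re := by
    calc 3 * exp s ≤ exp 2 * exp s := by gcongr; linarith [add_one_le_exp 2]
      _ = exp (s + 2) := by rw [exp_add, mul_comm]
      _ ≤ exp w.re := exp_le_exp.mpr hw
  linarith [exp_re_sub_norm_le_norm_expMap a w]

lemma add_two_le_re_of_max_le {u : ℂ} {R : ℝ} (hbox : max (-u.re) |u.im| ≤ R)
    (hnorm : 2 * R + 2 ≤ ‖u‖) : R + 2 ≤ u.re := by
  obtain ⟨hre, him⟩ := max_le_iff.mp hbox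
  have := Complex.norm_le_abs_re_add_abs_im u
  cases abs_cases u.re <;> linarith

section Orbit

variable {a z : ℂ} {t μ : ℝ}

lemma two_mul_iterate_Fgrowth_succ_add_two_le_norm {k : ℕ} (ha : ‖a‖ ≤ exp t)
    (hk : Fgrowth^[k] t + 2 ≤ ((expMap a)^[k] z).re) :
    2 * Fgrowth^[k + 1] t + 2 ≤ ‖(expMap a)^[k + 1] z‖ := by
  have ha' : ‖a‖ ≤ exp (Fgrowth^[k] t) := ha.trans (exp_le_exp.mpr (self_le_iterate_Fgrowth k t))
  rw [Function.iterate_succ_apply', Function.iterate_succ_apply']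
  simpa only [Fgrowth, mul_sub, mul_one, sub_add_cancel] using
    two_mul_exp_le_norm_expMap ha' hk

lemma add_two_le_re_iterate {n : ℕ} (ha : ‖a‖ ≤ exp t) (hμt : μ ≤ t) (hz : t + 2 ≤ z.re)
    (hbox : ∀ k < n, max (-(((expMap a)^[k] z).re)) |((expMap a)^[k] z).im| ≤ Fgrowth^[k] μ) :
    ∀ k < n, Fgrowth^[k] t + 2 ≤ ((expMap a)^[k] z).re := by
  intro k
  induction k with
  | zero => intro _; exact hz
  | succ k ih =>
    intro hk
    apply add_two_le_re_of_max_le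
    · exact (hbox (k + 1) hk).trans (monotone_Fgrowth.iterate (k + 1) hμt)
    · exact two_mul_iterate_Fgrowth_succ_add_two_le_norm ha (ih (by omega))

lemma iterate_Fgrowth_le_norm_iterate {n : ℕ} (ha : ‖a‖ ≤ exp t) (hμt : μ ≤ t)
    (hz : t + 2 ≤ z.re)
    (hbox : ∀ k < n, max (-(((expMap a)^[k] z).re)) |((expMap a)^[k] z).im| ≤ Fgrowth^[k] μ) :
    Fgrowth^[n] t ≤ ‖(expMap a)^[n] z‖ := by
  cases n with
  | zero =>
    simp only [Function.iterate_zero, id_eq]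
    linarith [Complex.re_le_norm z]
  | succ m =>
    have hnorm := two_mul_iterate_Fgrowth_succ_add_two_le_norm ha
      (add_two_le_re_iterate ha hμt hz hbox m (by omega))
    have hF : -1 ≤ Fgrowth^[m + 1] t := by
      rw [Function.iterate_succ_apply']
      simp only [Fgrowth]
      linarith [exp_pos (Fgrowth^[m] t)]
    linarith

end Orbit

theorem continued_growth_general (a : ℂ) (μ : ℝ) :
    ∃ K : ℝ, μ + 2 ≤ K ∧
      ∀ z : ℂ, K ≤ z.re → ∀ n : ℕ,
        (∀ k < n, max (-(((expMap a)^[k] z).re)) |((expMap a)^[k] z).im| ≤ Fgrowth^[k] μ) →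
        Fgrowth^[n] (z.re - 2) ≤ ‖(expMap a)^[n] z‖ := by
  refine ⟨max (2 + log (5 + ‖a‖)) (μ + 2), le_max_right _ _, fun z hz n hbox => ?_⟩
  obtain ⟨hlog, hμz⟩ := max_le_iff.mp hz
  have ha : ‖a‖ ≤ exp (z.re - 2) := by
    have h5 : (0 : ℝ) < 5 + ‖a‖ := by positivity
    linarith [(log_le_iff_le_exp h5).mp (show log (5 + ‖a‖) ≤ z.re - 2 by linarith)]
  exact iterate_Fgrowth_le_norm_iterate ha (by linarith) (by linarith) hbox

/-- **Continued growth.** For `a ∈ ℂ` and `μ ≥ 0` there is `K ≥ μ + 2` such that: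
for all `z` with `Re z ≥ K`, if `n ≥ 0` satisfies
`max(-Re f_a^k(z), |Im f_a^k(z)|) ≤ F^k(μ)` for all `0 ≤ k < n`, then
`|f_a^n(z)| ≥ F^n(Re z - 2)`. -/
theorem continued_growth (a : ℂ) (μ : ℝ) (hμ : 0 ≤ μ) :
    ∃ K : ℝ, μ + 2 ≤ K ∧
      ∀ z : ℂ, K ≤ z.re → ∀ n : ℕ,
        (∀ k < n, max (-(((expMap a)^[k] z).re)) |((expMap a)^[k] z).im| ≤ Fgrowth^[k] μ) →
        Fgrowth^[n] (z.re - 2) ≤ ‖(expMap a)^[n] z‖ :=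
  continued_growth_general a μ
end

section
/- Let a ∈ ℂ and suppose f_a(z) = e^z + a has an attracting periodic point p, i.e. f_a^m(p) = p for some m ≥ 1 with |(f_a^m)'(p)| < 1. Let C = {p, f_a(p), …, f_a^{m−1}(p)}. Then the singular value a is attracted to this cycle: dist(f_a^k(a), C) → 0 as k → ∞. -/
open Filter Set Metric Bornology

/-!
An attracting cycle has a disc `B = ball p r` in its basin. If `a` were not attracted, the
forward orbit of `a` would avoid `B`, so every inverse branch `H` of `f_a^[m(n+1)]` with
`H p = p` continues holomorphically to `B`: each pull-back takes a logarithm of `H - a`, which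
does not vanish on `B`. By the chain rule `|H'(p)| = |μ|^{-(n+1)}`, where `|μ| < 1` is the
multiplier of the cycle. But `f_a` is `2πi`-periodic, so `H(B)` contains no two points differing
by `2πi`, and Bloch's theorem then bounds `r |H'(p)|` independently of `n`.
-/

open Complex Topology
open scoped Real

theorem DifferentiableOn.exists_log_ball {G : ℂ → ℂ} {c : ℂ} {R : ℝ}
    (hG : DifferentiableOn ℂ G (ball c R)) (hG₀ : ∀ z ∈ ball c R, G z ≠ 0) :
    ∃ L : ℂ → ℂ, DifferentiableOn ℂ L (ball c R) ∧ ∀ z ∈ ball c R, cexp (L z) = G z := by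
  obtain ⟨F, hF⟩ := ((hG.deriv isOpen_ball).div hG hG₀).isExactOn_ball
  have hFd : DifferentiableOn ℂ F (ball c R) := fun z hz =>
    (hF z hz).differentiableAt.differentiableWithinAt
  obtain ⟨k, hk⟩ : ∃ k, ∀ z ∈ ball c R, G z * cexp (-F z) = k := by
    refine isOpen_ball.exists_is_const_of_deriv_eq_zero (convex_ball c R).isPreconnected
      (hG.mul hFd.neg.cexp) fun z hz => ?_
    have hGz := (hG.differentiableAt (isOpen_ball.mem_nhds hz)).hasDerivAt
    rw [(hGz.fun_mul (hF z hz).fun_neg.cexp).deriv]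
    simp only [Pi.div_apply, Pi.zero_apply]
    field_simp [hG₀ z hz]
    ring
  refine ⟨fun z => F z + Complex.log k, hFd.add_const _, fun z hz => ?_⟩
  have hk₀ : k ≠ 0 := hk z hz ▸ mul_ne_zero (hG₀ z hz) (Complex.exp_ne_zero _)
  rw [Complex.exp_add, Complex.exp_log hk₀, ← hk z hz, Complex.exp_neg]
  field_simp

theorem closedBall_subset_image_ball_of_norm_deriv_le {L : ℂ → ℂ} {z₀ : ℂ} {ρ K : ℝ}
    (hρ : 0 < ρ) (hL : DifferentiableOn ℂ L (ball z₀ ρ))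
    (hK : ∀ z ∈ ball z₀ ρ, ‖deriv L z‖ ≤ K) (hK₀ : K ≤ 2 * ‖deriv L z₀‖) :
    closedBall (L z₀) (K * ρ / 32) ⊆ L '' ball z₀ ρ := by
  set c₀ := deriv L z₀
  have hc₀K : ‖c₀‖ ≤ K := hK z₀ (mem_ball_self hρ)
  obtain hK0 | hKpos := (norm_nonneg c₀ |>.trans hc₀K).eq_or_lt
  · simpa [← hK0] using mem_image_of_mem L (mem_ball_self hρ)
  have hc₀ : c₀ ≠ 0 := norm_pos_iff.1 (by linarith)
  have hlip : ∀ z ∈ ball z₀ ρ, ‖deriv L z - c₀‖ ≤ 2 * K / ρ * ‖z - z₀‖ := fun z hz => by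
    simpa only [dist_eq_norm] using Complex.dist_le_div_mul_dist_of_mapsTo_ball
      (hL.deriv isOpen_ball) (fun w hw => mem_closedBall_iff_norm.2 <| by
        linarith [norm_sub_le (deriv L w) c₀, hK w hw]) hz
  have hδ : closedBall z₀ (ρ / 8) ⊆ ball z₀ ρ := closedBall_subset_ball (by linarith)
  have happrox : ApproximatesLinearOn L (ContinuousLinearMap.toSpanSingleton ℂ c₀)
      (closedBall z₀ (ρ / 8)) (K / 4).toNNReal := fun x hx y hy => by
    rw [Real.coe_toNNReal _ (by positivity)]
    refine (convex_closedBall z₀ (ρ / 8)).norm_image_sub_le_of_norm_hasFDerivWithin_le'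
      (fun z hz => ((hL.differentiableAt (isOpen_ball.mem_nhds (hδ hz))).hasDerivAt
        |>.hasFDerivAt.hasFDerivWithinAt)) (fun z hz => ?_) hy hx
    have hsub : ContinuousLinearMap.toSpanSingleton ℂ (deriv L z) -
        ContinuousLinearMap.toSpanSingleton ℂ c₀ =
        ContinuousLinearMap.toSpanSingleton ℂ (deriv L z - c₀) := by
      ext; simp
    rw [hsub, ContinuousLinearMap.norm_toSpanSingleton]
    calc ‖deriv L z - c₀‖ ≤ 2 * K / ρ * ‖z - z₀‖ := hlip z (hδ hz)
      _ ≤ 2 * K / ρ * (ρ / 8) := by gcongr; exact mem_closedBall_iff_norm.1 hz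
      _ = K / 4 := by field_simp; ring
  let c₀inv : (ContinuousLinearMap.toSpanSingleton ℂ c₀).NonlinearRightInverse :=
    { toFun := fun y => y / c₀
      nnnorm := ‖c₀‖₊⁻¹
      bound' := fun y => by simp [div_eq_inv_mul]
      right_inv' := fun y => by simp [hc₀] }
  refine (closedBall_subset_closedBall ?_).trans
    ((happrox.surjOn_closedBall_of_nonlinearRightInverse c₀inv (by positivity)
      subset_rfl).trans (image_mono hδ))
  simp only [c₀inv, NNReal.coe_inv, coe_nnnorm, inv_inv,
    Real.coe_toNNReal _ (by positivity : (0 : ℝ) ≤ K / 4)]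
  nlinarith

/-- Bloch's theorem, with a non-optimal constant. -/
theorem exists_ball_subset_image_ball {L : ℂ → ℂ} {c : ℂ} {R : ℝ}
    (hL : DifferentiableOn ℂ L (ball c R)) :
    ∃ w, ball w (R * ‖deriv L c‖ / 64) ⊆ L '' ball c R := by
  obtain hR | hR := le_or_gt R 0
  · refine ⟨0, ?_⟩
    rw [ball_eq_empty.2 (by nlinarith [norm_nonneg (deriv L c)])]
    exact empty_subset _
  obtain hc | hc := (norm_nonneg (deriv L c)).eq_or_lt
  · exact ⟨0, by simp [← hc]⟩
  set r := R / 2 with hr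
  -- With `zs` maximizing `‖L' z‖ * (r - dist z c)`, `‖L'‖` stays below `2 * ‖L' zs‖` on the
  -- ball around `zs` of half its distance to the sphere.
  have hcont : ContinuousOn (fun z => ‖deriv L z‖ * (r - dist z c)) (closedBall c r) :=
    ((hL.deriv isOpen_ball).continuousOn.mono (closedBall_subset_ball (by linarith))).norm.mul
      (continuous_const.sub (continuous_id.dist continuous_const)).continuousOn
  obtain ⟨zs, hzs, hmax⟩ := (isCompact_closedBall c r).exists_isMaxOn
    (nonempty_closedBall.2 (by positivity)) hcont
  have hcV : r * ‖deriv L c‖ ≤ ‖deriv L zs‖ * (r - dist zs c) := by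
    simpa [mul_comm] using hmax (mem_closedBall_self (by positivity : 0 ≤ r))
  set ρ := (r - dist zs c) / 2 with hρ_def
  have hρ : 0 < ρ := by nlinarith [norm_nonneg (deriv L zs)]
  have hsub : ball zs ρ ⊆ ball c R := fun z hz => by
    rw [mem_ball] at hz ⊢; linarith [dist_triangle z zs c]
  have hK : ∀ z ∈ ball zs ρ, ‖deriv L z‖ ≤ 2 * ‖deriv L zs‖ := fun z hz => by
    have hzc : dist z c < r - ρ := by rw [mem_ball] at hz; linarith [dist_triangle z zs c]
    have : ‖deriv L z‖ * (r - dist z c) ≤ ‖deriv L zs‖ * (r - dist zs c) :=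
      hmax (mem_closedBall.2 (by linarith))
    nlinarith [norm_nonneg (deriv L z)]
  refine ⟨L zs, ball_subset_closedBall.trans <| (closedBall_subset_closedBall ?_).trans <|
    (closedBall_subset_image_ball_of_norm_deriv_le hρ (hL.mono hsub) hK le_rfl).trans
      (image_mono hsub)⟩
  calc R * ‖deriv L c‖ / 64 = r * ‖deriv L c‖ / 32 := by rw [hr]; ring
    _ ≤ ‖deriv L zs‖ * (r - dist zs c) / 32 := by gcongr
    _ = 2 * ‖deriv L zs‖ * ρ / 32 := by rw [hρ_def]; ring

theorem mul_norm_deriv_le_of_forall_ne_add {L : ℂ → ℂ} {c ω : ℂ} {R : ℝ}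
    (hL : DifferentiableOn ℂ L (ball c R))
    (hω : ∀ z₁ ∈ ball c R, ∀ z₂ ∈ ball c R, L z₁ ≠ L z₂ + ω) :
    R * ‖deriv L c‖ ≤ 64 * ‖ω‖ := by
  by_contra! h
  obtain ⟨w, hw⟩ := exists_ball_subset_image_ball hL
  obtain ⟨z₁, hz₁, hLz₁⟩ := hw (a := w + ω)
    (mem_ball_iff_norm.2 (by rw [add_sub_cancel_left]; linarith))
  obtain ⟨z₂, hz₂, hLz₂⟩ := hw (mem_ball_self (by linarith [norm_nonneg ω]))
  exact hω z₁ hz₁ z₂ hz₂ (by rw [hLz₁, hLz₂])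

theorem exists_ball_tendsto_iterate_of_norm_lt_one {𝕜 : Type*} [NontriviallyNormedField 𝕜]
    {g : 𝕜 → 𝕜} {p μ : 𝕜} (hg : HasDerivAt g μ p) (hp : g p = p) (hμ : ‖μ‖ < 1) :
    ∃ r > 0, ∀ z ∈ ball p r, Tendsto (fun n => g^[n] z) atTop (𝓝 p) := by
  set κ := (1 + ‖μ‖) / 2 with hκ
  have hκ₀ : 0 ≤ κ := by positivity
  have hκ₁ : κ < 1 := by rw [hκ]; linarith
  have hcontract : ∀ᶠ z in 𝓝 p, dist (g z) p ≤ κ * dist z p := by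
    filter_upwards [hasDerivAt_iff_isLittleO.1 hg |>.def (by linarith : 0 < (1 - ‖μ‖) / 2)]
      with z hz
    rw [hp] at hz
    rw [dist_eq_norm, dist_eq_norm]
    calc ‖g z - p‖ ≤ ‖g z - p - (z - p) • μ‖ + ‖(z - p) • μ‖ := norm_le_norm_sub_add _ _
      _ ≤ (1 - ‖μ‖) / 2 * ‖z - p‖ + ‖z - p‖ * ‖μ‖ := by rw [norm_smul]; gcongr
      _ = κ * ‖z - p‖ := by ring
  obtain ⟨r, hr, hball⟩ := Metric.eventually_nhds_iff_ball.1 hcontract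
  refine ⟨r, hr, fun z hz => ?_⟩
  have horbit : ∀ n, dist (g^[n] z) p ≤ κ ^ n * dist z p := by
    intro n
    induction n with
    | zero => simp
    | succ n ih =>
      have hmem : g^[n] z ∈ ball p r := mem_ball.2 <| ih.trans_lt <|
        (mul_le_of_le_one_left dist_nonneg (pow_le_one₀ hκ₀ hκ₁.le)).trans_lt hz
      rw [Function.iterate_succ_apply', pow_succ', mul_assoc]
      exact (hball _ hmem).trans (mul_le_mul_of_nonneg_left ih hκ₀)
  refine tendsto_iff_dist_tendsto_zero.2 <| squeeze_zero (fun _ => dist_nonneg) horbit ?_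
  simpa using (tendsto_pow_atTop_nhds_zero_of_lt_one hκ₀ hκ₁).mul_const (dist z p)

theorem tendsto_atTop_of_forall_lt_tendsto_mul_add {α : Type*} {u : ℕ → α} {l : Filter α}
    {m : ℕ} (hm : 0 < m) (h : ∀ s < m, Tendsto (fun q => u (q * m + s)) atTop l) :
    Tendsto u atTop l := by
  refine tendsto_iff_forall_eventually_mem.2 fun S hS => ?_
  have hq : ∀ᶠ q in atTop, ∀ s < m, u (q * m + s) ∈ S := by
    simpa using (eventually_all_finset (Finset.range m)).2 fun s hs =>
      h s (Finset.mem_range.1 hs) hS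
  filter_upwards [(Nat.tendsto_div_const_atTop hm.ne').eventually hq] with k hk
  simpa [Nat.div_add_mod'] using hk (k % m) (Nat.mod_lt k hm)

theorem Function.Periodic.forall_ne_add_of_leftInvOn {α β : Type*} [AddGroup α] {g : α → β}
    {H : β → α} {ω : α} {s : Set β} (hg : Function.Periodic g ω) (hω : ω ≠ 0)
    (hH : LeftInvOn g H s) : ∀ z₁ ∈ s, ∀ z₂ ∈ s, H z₁ ≠ H z₂ + ω := by
  intro z₁ hz₁ z₂ hz₂ h
  obtain rfl : z₁ = z₂ := by rw [← hH hz₁, ← hH hz₂, h, hg]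
  exact hω (by simpa using h)

theorem mul_deriv_eq_one_of_leftInvOn {𝕜 : Type*} [NontriviallyNormedField 𝕜]
    {g H : 𝕜 → 𝕜} {μ z : 𝕜} {s : Set 𝕜} (hg : HasDerivAt g μ (H z))
    (hH : DifferentiableAt 𝕜 H z) (hs : s ∈ 𝓝 z) (hinv : LeftInvOn g H s) :
    μ * deriv H z = 1 :=
  (hg.comp z hH.hasDerivAt).unique
    ((hasDerivAt_id z).congr_of_eventuallyEq (eventually_of_mem hs hinv))

theorem differentiable_expMap (a : ℂ) : Differentiable ℂ (expMap a) :=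
  differentiable_exp.add_const a

theorem expMap_periodic (a : ℂ) : Function.Periodic (expMap a) (2 * π * I) := fun z => by
  simp only [expMap, Complex.exp_periodic z]

theorem expMap_iterate_periodic (a : ℂ) {j : ℕ} (hj : j ≠ 0) :
    Function.Periodic ((expMap a)^[j]) (2 * π * I) := by
  obtain ⟨k, rfl⟩ := Nat.exists_eq_succ_of_ne_zero hj
  rw [Function.iterate_succ]
  exact (expMap_periodic a).comp _

theorem iterate_mem_cycleSet {a p : ℂ} {m s : ℕ} (hs : s < m) :
    (expMap a)^[s] p ∈ cycleSet a p m :=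
  ⟨s, hs, rfl⟩

theorem mem_basin_of_iterate_mem {a z : ℂ} {C : Set ℂ} {k : ℕ}
    (h : (expMap a)^[k] z ∈ basin a C) : z ∈ basin a C := by
  refine (tendsto_add_atTop_iff_nat k).1 ?_
  simpa only [basin, mem_ofPred_eq, ← Function.iterate_add_apply] using h

theorem exists_ball_subset_basin {a p : ℂ} {m : ℕ} (hm : 0 < m)
    (hper : (expMap a)^[m] p = p) (hattr : ‖deriv ((expMap a)^[m]) p‖ < 1) :
    ∃ r > 0, ball p r ⊆ basin a (cycleSet a p m) := by
  obtain ⟨r, hr, hball⟩ := exists_ball_tendsto_iterate_of_norm_lt_one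
    ((differentiable_expMap a).iterate m p).hasDerivAt hper hattr
  refine ⟨r, hr, fun z hz => tendsto_atTop_of_forall_lt_tendsto_mul_add hm fun s hs => ?_⟩
  have hlim := (continuous_infDist_pt (cycleSet a p m)).comp
    ((differentiable_expMap a).iterate s).continuous |>.tendsto p |>.comp (hball z hz)
  rw [Function.comp_apply, infDist_zero_of_mem (iterate_mem_cycleSet hs)] at hlim
  refine hlim.congr fun q => ?_
  simp only [Function.comp_apply, ← Function.iterate_mul, ← Function.iterate_add_apply,
    mul_comm m q, add_comm s]

theorem exists_leftInvOn_iterate_expMap {a c : ℂ} {r : ℝ} (hr : 0 < r)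
    (ha : ∀ j, (expMap a)^[j] a ∉ ball c r) (j : ℕ) {w : ℂ} (hw : (expMap a)^[j] w = c) :
    ∃ H : ℂ → ℂ, DifferentiableOn ℂ H (ball c r) ∧ LeftInvOn ((expMap a)^[j]) H (ball c r) ∧
      H c = w := by
  induction j generalizing w with
  | zero => exact ⟨id, differentiableOn_id, fun z _ => rfl, hw.symm⟩
  | succ j ih =>
    rw [Function.iterate_succ_apply] at hw
    obtain ⟨H, hHd, hHinv, hHc⟩ := ih hw
    have hHa : ∀ z ∈ ball c r, H z - a ≠ 0 := fun z hz h => by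
      have hfa : (expMap a)^[j] (H z) = z := hHinv hz
      rw [sub_eq_zero.1 h] at hfa
      exact ha j (by rwa [hfa])
    obtain ⟨L, hLd, hL⟩ := (hHd.sub_const a).exists_log_ball hHa
    obtain ⟨k, hk⟩ : ∃ k : ℤ, L c = w + k * (2 * π * I) := by
      refine Complex.exp_eq_exp_iff_exists_int.1 ?_
      rw [hL c (mem_ball_self hr), hHc, expMap, add_sub_cancel_right]
    refine ⟨fun z => L z - k * (2 * π * I), hLd.sub_const _, fun z hz => ?_, by simp [hk]⟩
    have hLz : expMap a (L z - k * (2 * π * I)) = H z := by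
      rw [(expMap_periodic a).sub_int_mul_eq, expMap, hL z hz, sub_add_cancel]
    rw [Function.iterate_succ_apply, hLz, hHinv hz]

theorem le_mul_norm_deriv_pow_of_orbit_avoids_ball {a p : ℂ} {m : ℕ} {r : ℝ} (hm : 0 < m)
    (hr : 0 < r) (hper : (expMap a)^[m] p = p) (horbit : ∀ j, (expMap a)^[j] a ∉ ball p r)
    (n : ℕ) : r ≤ 64 * ‖2 * π * I‖ * ‖deriv ((expMap a)^[m]) p‖ ^ (n + 1) := by
  set μ := deriv ((expMap a)^[m]) p
  obtain ⟨H, hHd, hHinv, hHp⟩ := exists_leftInvOn_iterate_expMap hr horbit (m * (n + 1))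
    (by rw [Function.iterate_mul]; exact Function.iterate_fixed hper _)
  have hbloch := mul_norm_deriv_le_of_forall_ne_add hHd <|
    (expMap_iterate_periodic a (by positivity)).forall_ne_add_of_leftInvOn two_pi_I_ne_zero hHinv
  rw [Function.iterate_mul] at hHinv
  have hderiv : μ ^ (n + 1) * deriv H p = 1 := by
    refine mul_deriv_eq_one_of_leftInvOn ?_
      (hHd.differentiableAt (isOpen_ball.mem_nhds (mem_ball_self hr)))
      (isOpen_ball.mem_nhds (mem_ball_self hr)) hHinv
    rw [hHp]
    exact ((differentiable_expMap a).iterate m p).hasDerivAt.iterate p hper (n + 1)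
  calc r = r * ‖μ ^ (n + 1) * deriv H p‖ := by rw [hderiv, norm_one, mul_one]
    _ = ‖μ‖ ^ (n + 1) * (r * ‖deriv H p‖) := by rw [norm_mul, norm_pow]; ring
    _ ≤ ‖μ‖ ^ (n + 1) * (64 * ‖2 * π * I‖) := by gcongr
    _ = 64 * ‖2 * π * I‖ * ‖μ‖ ^ (n + 1) := by ring

theorem singular_value_attracted_to_cycle_general (a p : ℂ) (m : ℕ)
    (hper : (expMap a)^[m] p = p)
    (hattr : ‖deriv ((expMap a)^[m]) p‖ < 1) :
    Tendsto (fun k => Metric.infDist ((expMap a)^[k] a) (cycleSet a p m)) atTop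
      (nhds 0) := by
  have hm : 0 < m := Nat.pos_of_ne_zero (by rintro rfl; simp at hattr)
  obtain ⟨r, hr, hball⟩ := exists_ball_subset_basin hm hper hattr
  by_contra ha
  have horbit : ∀ j, (expMap a)^[j] a ∉ ball p r := fun j hj =>
    ha (mem_basin_of_iterate_mem (hball hj))
  have hlim : Tendsto (fun n => 64 * ‖2 * π * I‖ * ‖deriv ((expMap a)^[m]) p‖ ^ (n + 1))
      atTop (𝓝 0) := by
    simpa using ((tendsto_pow_atTop_nhds_zero_of_lt_one (norm_nonneg _) hattr).comp
      (tendsto_add_atTop_nat 1)).const_mul (64 * ‖2 * π * I‖)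
  exact hr.not_ge <|
    ge_of_tendsto' hlim (le_mul_norm_deriv_pow_of_orbit_avoids_ball hm hr hper horbit)

/-- If `f_a` has an attracting periodic point `p` of period `m`, then the singular
value `a` is attracted to the cycle `{p, f_a(p), …, f_a^{m-1}(p)}`. -/
theorem singular_value_attracted_to_cycle (a p : ℂ) (m : ℕ) (hm : 1 ≤ m)
    (hper : (expMap a)^[m] p = p)
    (hattr : ‖deriv ((expMap a)^[m]) p‖ < 1) :
    Tendsto (fun k => Metric.infDist ((expMap a)^[k] a) (cycleSet a p m)) atTop
      (nhds 0) :=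
  singular_value_attracted_to_cycle_general a p m hper hattr
end
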